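/- arXiv:2405.17314 — 10 statements merged into one kernel-verified Lean document; each statement's English description precedes it below -/
import Mathlib

section
/- Let T be a phylogenetic X-tree with root ρ and F a food-web on X. If S ⊆ X is viable and x ∈ (predators(S) ∪ sources(F)) \ S, then S ∪ {x} is viable and PD_T(S ∪ {x}) ≥ PD_T(S). Moreover, if X is nonempty and S ≠ X, then (predators(S) ∪ sources(F)) \ S is nonempty. -/
/-- A set `S` of taxa is viable in the food-web `F` (where `F y x` means that
`y` is a prey of `x`) if every member of `S` is a source of `F` or has at least
one prey in `S`. -/
def Viable {X : Type*} (F : X → X → Prop) (S : Finset X) : Prop :=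
  ∀ x ∈ S, (∀ y, ¬ F y x) ∨ ∃ y ∈ S, F y x

/-- The phylogenetic diversity of a set `A` of taxa. -/
def PD {X ι : Type*} [DecidableEq X] [Fintype ι] (ω : ι → ℕ)
    (off : ι → Finset X) (A : Finset X) : ℕ :=
  ∑ e : ι, if (off e ∩ A).Nonempty then ω e else 0

/-- If `S` is viable and `x ∈ (predators(S) ∪ sources(F)) \ S`, then
`S ∪ {x}` is viable and `PD (S ∪ {x}) ≥ PD S`.  Moreover, if `X` is nonempty
and `S ≠ X`, then `(predators(S) ∪ sources(F)) \ S` is nonempty. -/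
theorem stmt_2 {X ι : Type*} [Fintype X] [DecidableEq X] [Fintype ι]
    (F : X → X → Prop) (hdag : ∀ x : X, ¬ Relation.TransGen F x x)
    (ω : ι → ℕ) (hω : ∀ e, 0 < ω e) (off : ι → Finset X)
    (hoff : ∀ e, (off e).Nonempty)
    (S : Finset X) (hS : Viable F S) :
    (∀ x : X, x ∉ S → ((∃ s ∈ S, F s x) ∨ (∀ z, ¬ F z x)) →
        Viable F (insert x S) ∧ PD ω off S ≤ PD ω off (insert x S)) ∧
    (Nonempty X → S ≠ Finset.univ →
        ∃ x : X, x ∉ S ∧ ((∃ s ∈ S, F s x) ∨ (∀ z, ¬ F z x))) := by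
  classical
  constructor
  · intro x hx hcase
    constructor
    · intro a ha
      rcases Finset.mem_insert.mp ha with rfl | haS
      · rcases hcase with ⟨s, hs, hFs⟩ | hsrc
        · exact Or.inr ⟨s, Finset.mem_insert_of_mem hs, hFs⟩
        · exact Or.inl hsrc
      · rcases hS a haS with h | ⟨y, hy, hFy⟩
        · exact Or.inl h
        · exact Or.inr ⟨y, Finset.mem_insert_of_mem hy, hFy⟩
    · apply Finset.sum_le_sum
      intro e _
      split_ifs with h1 h2
      · exact le_refl _
      · exact absurd (h1.mono (Finset.inter_subset_inter_left (Finset.subset_insert x S))) h2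
      · exact Nat.zero_le _
      · exact Nat.zero_le _
  · intro _ hne
    -- F is well-founded since TransGen F is irreflexive on a finite type
    haveI : IsIrrefl X (Relation.TransGen F) := ⟨hdag⟩
    haveI : IsTrans X (Relation.TransGen F) := ⟨fun _ _ _ => Relation.TransGen.trans⟩
    have hwfT : WellFounded (Relation.TransGen F) :=
      Finite.wellFounded_of_trans_of_irrefl _
    have hwf : WellFounded F := Subrelation.wf (fun h => Relation.TransGen.single h) hwfT
    obtain ⟨x, hx⟩ : ∃ x : X, x ∉ S := by
      by_contra h
      push_neg at h
      exact hne (Finset.eq_univ_of_forall h)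
    induction x using hwf.induction with
    | _ x ih =>
      by_cases hxS : x ∈ S
      · exact absurd hxS hx
      by_cases hsrc : ∀ z, ¬ F z x
      · exact ⟨x, hxS, Or.inr hsrc⟩
      push_neg at hsrc
      obtain ⟨z, hz⟩ := hsrc
      by_cases hzS : z ∈ S
      · exact ⟨x, hxS, Or.inl ⟨z, hzS, hz⟩⟩
      · exact ih z hz hzS
end

section
/- Let T be a phylogenetic X-tree with root ρ, F a food-web on X, k a natural number, D ≥ 0 an integer, and ⋆ ∉ X. Let F' be the food-web on X ∪ {⋆} obtained from F by adding the vertex ⋆ together with an edge from ⋆ to every source of F, and let T' be obtained from T by adding ⋆ as a new leaf child of ρ with edge weight ω'(ρ⋆) = D + 1 (all other weights unchanged). Then there exists a set S ⊆ X viable in F with |S| ≤ k and PD_T(S) ≥ D if and only if there exists a set S' ⊆ X ∪ {⋆} viable in F' with |S'| ≤ k + 1 and PD_{T'}(S') ≥ 2D + 1. -/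
lemma exists_min_aux {X : Type*} (F : X → X → Prop)
    (hdag : ∀ x : X, ¬ Relation.TransGen F x x) :
    ∀ S : Finset X, S.Nonempty → ∃ x ∈ S, ∀ y ∈ S, ¬ F y x := by
  classical
  intro S
  induction S using Finset.strongInduction with
  | _ S ih =>
    intro hS
    obtain ⟨x, hx⟩ := hS
    set T := S.filter (fun y => Relation.TransGen F y x) with hT
    by_cases hTne : T.Nonempty
    · have hsub : T ⊂ S := by
        refine ⟨Finset.filter_subset _ _, fun hsub => ?_⟩
        have := hsub hx
        rw [hT, Finset.mem_filter] at this
        exact hdag x this.2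
      obtain ⟨z, hzT, hz⟩ := ih T hsub hTne
      rw [hT, Finset.mem_filter] at hzT
      refine ⟨z, hzT.1, fun y hy hFyz => ?_⟩
      have hyT : y ∈ T := by
        rw [hT, Finset.mem_filter]
        exact ⟨hy, (Relation.TransGen.single hFyz).trans hzT.2⟩
      exact hz y hyT hFyz
    · refine ⟨x, hx, fun y hy hFyx => ?_⟩
      exact hTne ⟨y, by
        rw [hT, Finset.mem_filter]
        exact ⟨hy, Relation.TransGen.single hFyx⟩⟩

lemma pd_split {X ι : Type*} [Fintype X] [DecidableEq X] [Fintype ι]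
    (ω : ι → ℕ) (off : ι → Finset X) (D : ℕ) (S' : Finset (Option X)) :
    PD (Sum.elim ω fun _ : Unit => D + 1)
        (Sum.elim (fun e => (off e).image some)
          (fun _ : Unit => ({none} : Finset (Option X)))) S'
      = (∑ e : ι, if ((off e).image some ∩ S').Nonempty then ω e else 0)
        + (if none ∈ S' then D + 1 else 0) := by
  rw [PD, Fintype.sum_sum_type]
  simp [Finset.Nonempty, Finset.mem_inter]

/-- Adding a new taxon `⋆` (here `none : Option X`) that is prey of every
source of `F` and a new leaf child `⋆` of the root with edge weight `D + 1`
(a new edge, indexed by `Unit`, whose only offspring is `⋆`):  the original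
instance has a viable set of size at most `k` with diversity at least `D`
iff the new one has a viable set of size at most `k + 1` with diversity at
least `2 * D + 1`. -/
theorem stmt_3 {X ι : Type*} [Fintype X] [DecidableEq X] [Fintype ι]
    (F : X → X → Prop) (hdag : ∀ x : X, ¬ Relation.TransGen F x x)
    (ω : ι → ℕ) (hω : ∀ e, 0 < ω e) (off : ι → Finset X)
    (hoff : ∀ e, (off e).Nonempty) (k D : ℕ) :
    (∃ S : Finset X, Viable F S ∧ S.card ≤ k ∧ D ≤ PD ω off S) ↔
    (∃ S' : Finset (Option X),
        Viable (fun a b : Option X =>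
          match a, b with
          | some u, some v => F u v
          | none, some v => ∀ y, ¬ F y v
          | _, none => False) S' ∧
        S'.card ≤ k + 1 ∧
        2 * D + 1 ≤
          PD (Sum.elim ω fun _ : Unit => D + 1)
            (Sum.elim (fun e => (off e).image some)
              fun _ : Unit => ({none} : Finset (Option X))) S') := by
  classical
  constructor
  · rintro ⟨S, hV, hcard, hPD⟩
    refine ⟨insert none (S.image some), ?_, ?_, ?_⟩
    · rintro (_ | x) hx
      · left; rintro (_ | y) h <;> exact h
      · have hxS : x ∈ S := by
          rcases Finset.mem_insert.1 hx with h | h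
          · exact absurd h (by simp)
          · obtain ⟨y, hy, hyx⟩ := Finset.mem_image.1 h
            rwa [Option.some_inj.1 hyx] at hy
        rcases hV x hxS with hsrc | ⟨y, hyS, hFyx⟩
        · exact Or.inr ⟨none, Finset.mem_insert_self _ _, hsrc⟩
        · exact Or.inr ⟨some y, Finset.mem_insert.2 (Or.inr
            (Finset.mem_image_of_mem _ hyS)), hFyx⟩
    · calc (insert none (S.image some)).card ≤ (S.image some).card + 1 :=
            Finset.card_insert_le _ _
        _ ≤ k + 1 := by
            have := Finset.card_image_le (f := some) (s := S)
            omega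
    · rw [pd_split]
      have h1 : ∀ e : ι, ((off e).image some ∩ insert none (S.image some)).Nonempty
          ↔ (off e ∩ S).Nonempty := by
        intro e
        constructor
        · rintro ⟨z, hz⟩
          rw [Finset.mem_inter] at hz
          obtain ⟨a, ha, rfl⟩ := Finset.mem_image.1 hz.1
          have : some a ∈ S.image some := by
            rcases Finset.mem_insert.1 hz.2 with h | h
            · exact absurd h (by simp)
            · exact h
          obtain ⟨b, hb, hba⟩ := Finset.mem_image.1 this
          exact ⟨a, Finset.mem_inter.2 ⟨ha, by rwa [Option.some_inj.1 hba] at hb⟩⟩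
        · rintro ⟨a, ha⟩
          rw [Finset.mem_inter] at ha
          exact ⟨some a, Finset.mem_inter.2 ⟨Finset.mem_image_of_mem _ ha.1,
            Finset.mem_insert.2 (Or.inr (Finset.mem_image_of_mem _ ha.2))⟩⟩
      have h2 : (∑ e : ι, if ((off e).image some ∩ insert none (S.image some)).Nonempty
            then ω e else 0) = PD ω off S := by
        rw [PD]; exact Finset.sum_congr rfl (fun e _ => if_congr (h1 e) rfl rfl)
      rw [h2, if_pos (Finset.mem_insert_self _ _)]
      omega
  · rintro ⟨S', hV, hcard, hPD⟩
    by_cases hD : D = 0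
    · refine ⟨∅, by intro x hx; simp at hx, by simp, by omega⟩
    set S : Finset X := Finset.univ.filter (fun x => some x ∈ S') with hSdef
    have hmemS : ∀ x : X, x ∈ S ↔ some x ∈ S' := by
      intro x; simp [hSdef]
    -- the first disjunct of viability is impossible for `some x`
    have hnofirst : ∀ x : X, ¬ (∀ y : Option X, ¬ (match y, some x with
        | some u, some v => F u v
        | none, some v => ∀ y, ¬ F y v
        | _, none => False : Prop)) := by
      intro x h
      have h1 : ∀ y, ¬ F y x := fun y => h (some y)
      exact h none h1
    -- if S is nonempty then none ∈ S', else S' ⊆ {none}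
    have hnone : none ∈ S' := by
      by_contra hn
      have hSomeOnly : ∀ z ∈ S', ∃ x : X, z = some x := by
        rintro (_ | x) hz
        · exact absurd hz hn
        · exact ⟨x, rfl⟩
      by_cases hSe : S.Nonempty
      · obtain ⟨x, hxS, hxmin⟩ := exists_min_aux F hdag S hSe
        rcases hV (some x) ((hmemS x).1 hxS) with h | ⟨y, hyS', hFy⟩
        · exact hnofirst x h
        · match y, hFy with
          | some y, hFy => exact hxmin y ((hmemS y).2 hyS') hFy
          | none, hFy => exact hn hyS'
      · have hS'empty : S' = ∅ := by
          rw [Finset.eq_empty_iff_forall_notMem]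
          rintro z hz
          obtain ⟨x, rfl⟩ := hSomeOnly z hz
          exact hSe ⟨x, (hmemS x).2 hz⟩
        rw [pd_split, hS'empty] at hPD
        simp at hPD
    refine ⟨S, ?_, ?_, ?_⟩
    · intro x hxS
      rcases hV (some x) ((hmemS x).1 hxS) with h | ⟨y, hyS', hFy⟩
      · exact absurd h (hnofirst x)
      · match y, hFy with
        | some y, hFy => exact Or.inr ⟨y, (hmemS y).2 hyS', hFy⟩
        | none, hFy => exact Or.inl hFy
    · have himg : S.image some = S'.erase none := by
        ext z
        rw [Finset.mem_image, Finset.mem_erase]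
        constructor
        · rintro ⟨x, hx, rfl⟩; exact ⟨by simp, (hmemS x).1 hx⟩
        · rintro ⟨hz1, hz2⟩
          match z with
          | none => exact absurd rfl hz1
          | some x => exact ⟨x, (hmemS x).2 hz2, rfl⟩
      have h1 : S.card = (S'.erase none).card := by
        rw [← himg, Finset.card_image_of_injective _ (Option.some_injective X)]
      have h2 : (S'.erase none).card = S'.card - 1 :=
        Finset.card_erase_of_mem hnone
      have h3 : 1 ≤ S'.card := Finset.card_pos.2 ⟨none, hnone⟩
      omega
    · rw [pd_split, if_pos hnone] at hPD
      have h1 : ∀ e : ι, ((off e).image some ∩ S').Nonempty ↔ (off e ∩ S).Nonempty := by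
        intro e
        constructor
        · rintro ⟨z, hz⟩
          rw [Finset.mem_inter] at hz
          obtain ⟨a, ha, rfl⟩ := Finset.mem_image.1 hz.1
          exact ⟨a, Finset.mem_inter.2 ⟨ha, (hmemS a).2 hz.2⟩⟩
        · rintro ⟨a, ha⟩
          rw [Finset.mem_inter] at ha
          exact ⟨some a, Finset.mem_inter.2 ⟨Finset.mem_image_of_mem _ ha.1,
            (hmemS a).1 ha.2⟩⟩
      have h2 : (∑ e : ι, if ((off e).image some ∩ S').Nonempty then ω e else 0)
          = PD ω off S := by
        rw [PD]; exact Finset.sum_congr rfl (fun e _ => if_congr (h1 e) rfl rfl)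
      rw [h2] at hPD
      omega
end

section
/- Let T be a rooted tree with root ρ and leaf set X equipped with a vertex coloring c, and let (T_P, c_P) be a vertex-colored rooted tree. Let S ⊆ X be such that span_T(S ∪ {ρ}) and T_P are color-equal. If uv is an edge of T such that no edge u'v' of T_P satisfies c_P(u') = c(u) and c_P(v') = c(v), then S ∩ off(v) = ∅. -/
/-- A rooted tree on the vertex type `V`, given by its root and the parent
function (the root is its own parent), in which every vertex reaches the root
by repeatedly taking parents. -/
structure RTree (V : Type*) where
  root : V
  parent : V → V
  parent_root : parent root = root
  reach : ∀ v : V, Relation.ReflTransGen (fun a b => parent a = b) v root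

namespace RTree

variable {V : Type*}

/-- `u` is the parent of `v`, i.e. `uv` is an edge of the tree. -/
def childRel (T : RTree V) (u v : V) : Prop :=
  T.parent v = u ∧ v ≠ T.root

/-- `v` is an ancestor of (or equal to) `w`. -/
def descend (T : RTree V) : V → V → Prop :=
  Relation.ReflTransGen T.childRel

/-- A leaf is a vertex without children. -/
def IsLeaf (T : RTree V) (v : V) : Prop :=
  ∀ w, ¬ T.childRel v w

/-- `off v` is the set of leaves that are descendants of `v`. -/
def off (T : RTree V) (v : V) : Set V :=
  {x | T.IsLeaf x ∧ T.descend v x}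

/-- `uv` is an edge of the spanning tree `span_T(Y)` (the union of the paths
from the root to the vertices of `Y`). -/
def spanEdge (T : RTree V) (Y : Set V) (u v : V) : Prop :=
  T.childRel u v ∧ ∃ y ∈ Y, T.descend v y

end RTree

/-- `span_T(Y)` and `T_P` are color-equal: for every pair of colors `(a, b)`,
the spanning tree has an edge with endpoint colors `(a, b)` iff the pattern
tree has such an edge. -/
def ColorEqual {V VP C : Type*} (T : RTree V) (c : V → C) (Y : Set V)
    (TP : RTree VP) (cP : VP → C) : Prop :=
  ∀ a b : C,
    (∃ u v, T.spanEdge Y u v ∧ c u = a ∧ c v = b) ↔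
    (∃ u' v', TP.childRel u' v' ∧ cP u' = a ∧ cP v' = b)

/-- If `span_T(S ∪ {ρ})` and `T_P` are color-equal and `uv` is an edge of `T`
such that no edge `u'v'` of `T_P` has `c_P u' = c u` and `c_P v' = c v`, then
`S ∩ off(v) = ∅`. -/
theorem stmt_7 {V VP C : Type*} [Fintype V] [Fintype VP]
    (T : RTree V) (TP : RTree VP) (c : V → C) (cP : VP → C)
    (S : Set V) (hS : ∀ x ∈ S, T.IsLeaf x)
    (hce : ColorEqual T c (S ∪ {T.root}) TP cP)
    (u v : V) (huv : T.childRel u v)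
    (hno : ∀ u' v', TP.childRel u' v' → ¬(cP u' = c u ∧ cP v' = c v)) :
    S ∩ T.off v = ∅ := by
  ext x
  simp only [Set.mem_inter_iff, Set.mem_empty_iff_false, iff_false, not_and]
  intro hxS hxoff
  have hspan : T.spanEdge (S ∪ {T.root}) u v := ⟨huv, x, Or.inl hxS, hxoff.2⟩
  obtain ⟨u', v', h', ha, hb⟩ := (hce (c u) (c v)).1 ⟨u, v, hspan, rfl, rfl⟩
  exact hno u' v' h' ⟨ha, hb⟩
end

section
/- Let T be a rooted tree with root ρ and leaf set X equipped with a vertex coloring c, and let (T_P, c_P) be a vertex-colored rooted tree. Let S ⊆ X be such that span_T(S ∪ {ρ}) and T_P are color-equal and c is injective on the vertices of span_T(S ∪ {ρ}). Let u'v' be an edge of T_P and let u be a vertex of T with c(u) = c_P(u') such that no child v of u in T satisfies c(v) = c_P(v'). Then S ∩ off(u) = ∅. -/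
namespace RTree

variable {V : Type*}

/-- `v` is a vertex of the spanning tree `span_T(Y)`. -/
def spanVertex (T : RTree V) (Y : Set V) (v : V) : Prop :=
  ∃ y ∈ Y, T.descend v y

end RTree

/-- Suppose `span_T(S ∪ {ρ})` and `T_P` are color-equal and `c` is injective
on the vertices of `span_T(S ∪ {ρ})`.  If `u'v'` is an edge of `T_P` and `u`
is a vertex of `T` with `c u = c_P u'` having no child `v` with
`c v = c_P v'`, then `S ∩ off(u) = ∅`. -/
theorem stmt_8 {V VP C : Type*} [Fintype V] [Fintype VP]
    (T : RTree V) (TP : RTree VP) (c : V → C) (cP : VP → C)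
    (S : Set V) (hS : ∀ x ∈ S, T.IsLeaf x)
    (hce : ColorEqual T c (S ∪ {T.root}) TP cP)
    (hinj : Set.InjOn c {w : V | T.spanVertex (S ∪ {T.root}) w})
    (u' v' : VP) (hP : TP.childRel u' v')
    (u : V) (hcu : c u = cP u')
    (hnochild : ∀ v : V, T.childRel u v → c v ≠ cP v') :
    S ∩ T.off u = ∅ := by
  rw [Set.eq_empty_iff_forall_notMem]
  rintro x ⟨hxS, hxleaf, hdesc⟩
  obtain ⟨w, v, ⟨hwv, hy⟩, hcw, hcv⟩ := (hce (cP u') (cP v')).mpr ⟨u', v', hP, rfl, rfl⟩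
  have hwspan : T.spanVertex (S ∪ {T.root}) w := by
    obtain ⟨y, hy1, hy2⟩ := hy
    exact ⟨y, hy1, Relation.ReflTransGen.head hwv hy2⟩
  have huspan : T.spanVertex (S ∪ {T.root}) u := ⟨x, Or.inl hxS, hdesc⟩
  have hwu : w = u := hinj hwspan huspan (hcw.trans hcu.symm)
  exact hnochild v (hwu ▸ hwv) hcv
end

section
/- Let T be a phylogenetic X-tree with root ρ and edge weights ω, and let u be an internal vertex that is a child of ρ, with children w_1, …, w_ℓ. Let T' be the tree obtained from T by deleting u and making each w_i a child of ρ, with weights ω'(ρw_1) = ω(ρu) + ω(uw_1), ω'(ρw_i) = ω(uw_i) for 2 ≤ i ≤ ℓ, and all other edge weights unchanged. Then for every S ⊆ X such that S ∩ off_T(u) ≠ ∅ implies S ∩ off_T(w_1) ≠ ∅, it holds that PD_{T'}(S) = PD_T(S). -/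
/-- Contracting an internal child `u` of the root: in `T`, the root has the
edge `ρu` of weight `ωu`, `u` has the children `w i` (`i : κ`) via edges of
weight `ωw i` with offspring sets `offw i` (so that the offspring of `u` are
`⋃ i, offw i`), and the remaining edges are indexed by `ι₀`.  In `T'`, every
`w i` becomes a child of the root, the edge to `w k₁` gets weight
`ωu + ωw k₁`, and the edges to the other `w i` keep weight `ωw i`.  For every
set `S` of taxa such that `S ∩ off(u) ≠ ∅` implies `S ∩ off(w k₁) ≠ ∅`, the
phylogenetic diversity of `S` in `T'` equals that in `T`. -/
theorem stmt_9 {X ι₀ κ : Type*} [DecidableEq X] [Fintype ι₀] [Fintype κ]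
    [DecidableEq κ]
    (ω₀ : ι₀ → ℕ) (off₀ : ι₀ → Finset X)
    (hω₀ : ∀ e, 0 < ω₀ e) (hoff₀ : ∀ e, (off₀ e).Nonempty)
    (ωu : ℕ) (hωu : 0 < ωu)
    (ωw : κ → ℕ) (hωw : ∀ i, 0 < ωw i)
    (offw : κ → Finset X) (hoffw : ∀ i, (offw i).Nonempty)
    (k₁ : κ) (S : Finset X)
    (hcond : ((Finset.univ.biUnion offw) ∩ S).Nonempty →
        (offw k₁ ∩ S).Nonempty) :
    ((∑ i : κ, if (offw i ∩ S).Nonempty then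
          (if i = k₁ then ωu + ωw i else ωw i) else 0) +
        ∑ e : ι₀, if (off₀ e ∩ S).Nonempty then ω₀ e else 0) =
      ((if ((Finset.univ.biUnion offw) ∩ S).Nonempty then ωu else 0) +
        (∑ i : κ, if (offw i ∩ S).Nonempty then ωw i else 0) +
        ∑ e : ι₀, if (off₀ e ∩ S).Nonempty then ω₀ e else 0) := by
  have hiff : ((Finset.univ.biUnion offw) ∩ S).Nonempty ↔ (offw k₁ ∩ S).Nonempty := by
    constructor
    · exact hcond
    · rintro ⟨x, hx⟩
      simp only [Finset.mem_inter] at hx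
      exact ⟨x, Finset.mem_inter.2 ⟨Finset.mem_biUnion.2 ⟨k₁, Finset.mem_univ _, hx.1⟩, hx.2⟩⟩
  have key : ∀ i : κ, (if (offw i ∩ S).Nonempty then
          (if i = k₁ then ωu + ωw i else ωw i) else 0) =
      (if i = k₁ then (if (offw k₁ ∩ S).Nonempty then ωu else 0) else 0) +
        (if (offw i ∩ S).Nonempty then ωw i else 0) := by
    intro i
    by_cases hi : i = k₁
    · subst hi
      by_cases h : (offw i ∩ S).Nonempty <;> simp [h]
    · simp [hi]
  simp only [key, Finset.sum_add_distrib, Finset.sum_ite_eq', Finset.mem_univ, if_true, hiff]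
end

section
/- Let G be a bipartite graph with vertex bipartition V_r ∪ V_b and let k be a natural number. The following are equivalent: (i) there exists S ⊆ V_r with |S| ≥ k such that every vertex of V_b has a neighbor in V_r \ S; (ii) there exists S' ⊆ V_r ∪ V_b with |S'| ≤ |V_r| + |V_b| − k such that every vertex of S' ∩ V_b has a neighbor in S' ∩ V_r and |S' ∩ V_r| + 2·|S' ∩ V_b| ≥ |V_r| − k + 2·|V_b|. -/
/-- Correctness of the reduction from Red-Blue Non-Blocker to s-PDD.
Let `G` be a bipartite graph with bipartition `Vr ∪ Vb` and `k` a natural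
number.  There is `S ⊆ Vr` with `|S| ≥ k` such that every vertex of `Vb` has
a neighbor in `Vr \ S` iff there is `S' ⊆ Vr ∪ Vb` with
`|S'| ≤ |Vr| + |Vb| − k` such that every vertex of `S' ∩ Vb` has a neighbor in
`S' ∩ Vr` and `|S' ∩ Vr| + 2·|S' ∩ Vb| ≥ |Vr| − k + 2·|Vb|`. -/
theorem stmt_11 {V : Type*} [Fintype V] [DecidableEq V]
    (G : SimpleGraph V) (Vr Vb : Finset V)
    (hdisj : Disjoint Vr Vb) (hcover : Vr ∪ Vb = Finset.univ)
    (hbip : ∀ u v : V, G.Adj u v → (u ∈ Vr ∧ v ∈ Vb) ∨ (u ∈ Vb ∧ v ∈ Vr))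
    (k : ℕ) :
    (∃ S : Finset V, S ⊆ Vr ∧ k ≤ S.card ∧
        ∀ b ∈ Vb, ∃ r ∈ Vr \ S, G.Adj r b) ↔
    (∃ S' : Finset V, S' ⊆ Vr ∪ Vb ∧
        (S'.card : ℤ) ≤ (Vr.card : ℤ) + (Vb.card : ℤ) - (k : ℤ) ∧
        (∀ b ∈ S' ∩ Vb, ∃ r ∈ S' ∩ Vr, G.Adj r b) ∧
        (Vr.card : ℤ) - (k : ℤ) + 2 * (Vb.card : ℤ) ≤
          ((S' ∩ Vr).card : ℤ) + 2 * ((S' ∩ Vb).card : ℤ)) := by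

  constructor
  · rintro ⟨S, hSr, hkS, hS⟩
    obtain ⟨S0, hS0S, hS0card⟩ := Finset.exists_subset_card_eq hkS
    have hS0r : S0 ⊆ Vr := hS0S.trans hSr
    refine ⟨(Vr \ S0) ∪ Vb, ?_, ?_, ?_, ?_⟩
    · exact Finset.union_subset_union (Finset.sdiff_subset) (le_refl Vb)
    · have hd : Disjoint (Vr \ S0) Vb := hdisj.mono_left Finset.sdiff_subset
      rw [Finset.card_union_of_disjoint hd, Finset.card_sdiff_of_subset hS0r, hS0card]
      have : k ≤ Vr.card := hS0card ▸ Finset.card_le_card hS0r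
      push_cast [Nat.cast_sub this]
      ring_nf
      omega
    · intro b hb
      have hbVb : b ∈ Vb := (Finset.mem_inter.1 hb).2
      obtain ⟨r, hr, hadj⟩ := hS b hbVb
      have hrS : r ∈ Vr \ S0 := by
        rw [Finset.mem_sdiff] at hr ⊢
        exact ⟨hr.1, fun h => hr.2 (hS0S h)⟩
      refine ⟨r, Finset.mem_inter.2 ⟨Finset.mem_union_left _ hrS, (Finset.mem_sdiff.1 hrS).1⟩, hadj⟩
    · have h1 : ((Vr \ S0) ∪ Vb) ∩ Vr = Vr \ S0 := by
        ext x
        simp only [Finset.mem_inter, Finset.mem_union, Finset.mem_sdiff]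
        constructor
        · rintro ⟨h | h, hx⟩
          · exact h
          · exact absurd hx (Finset.disjoint_right.1 hdisj h)
        · exact fun h => ⟨Or.inl h, h.1⟩
      have h2 : ((Vr \ S0) ∪ Vb) ∩ Vb = Vb := by
        ext x
        simp only [Finset.mem_inter, Finset.mem_union, Finset.mem_sdiff]
        constructor
        · exact fun h => h.2
        · exact fun h => ⟨Or.inr h, h⟩
      rw [h1, h2, Finset.card_sdiff_of_subset hS0r, hS0card]
      have : k ≤ Vr.card := hS0card ▸ Finset.card_le_card hS0r
      push_cast [Nat.cast_sub this]
      ring_nf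
      omega
  · rintro ⟨S', hS'sub, hS'card, hS'adj, hS'w⟩
    have hsplit : S' = (S' ∩ Vr) ∪ (S' ∩ Vb) := by
      rw [← Finset.inter_union_distrib_left]
      exact (Finset.inter_eq_left.2 hS'sub).symm
    have hd : Disjoint (S' ∩ Vr) (S' ∩ Vb) :=
      hdisj.mono Finset.inter_subset_right Finset.inter_subset_right
    have hcardsum : S'.card = (S' ∩ Vr).card + (S' ∩ Vb).card := by
      conv_lhs => rw [hsplit]
      exact Finset.card_union_of_disjoint hd
    have hbsub : S' ∩ Vb ⊆ Vb := Finset.inter_subset_right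
    have hble : (S' ∩ Vb).card ≤ Vb.card := Finset.card_le_card hbsub
    have hbeq : S' ∩ Vb = Vb := by
      apply Finset.eq_of_subset_of_card_le hbsub
      omega
    have hale : ((S' ∩ Vr).card : ℤ) ≤ (Vr.card : ℤ) - k := by
      rw [hbeq] at hS'w hcardsum
      omega
    refine ⟨Vr \ S', Finset.sdiff_subset, ?_, ?_⟩
    · have : Vr \ S' = Vr \ (S' ∩ Vr) := by
        ext x
        simp only [Finset.mem_sdiff, Finset.mem_inter]
        tauto
      rw [this, Finset.card_sdiff_of_subset Finset.inter_subset_right]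
      have := Finset.card_le_card (Finset.inter_subset_right (s₁ := S') (s₂ := Vr))
      omega
    · intro b hb
      obtain ⟨r, hr, hadj⟩ := hS'adj b (by rw [hbeq]; exact hb)
      rw [Finset.mem_inter] at hr
      exact ⟨r, Finset.mem_sdiff.2 ⟨hr.2, fun h => (Finset.mem_sdiff.1 h).2 hr.1⟩, hadj⟩
end

section
/- Let G = (V, E) be a finite graph, let k ≤ |V| be a natural number, and let N ≥ 2 be an integer. Let P := {(u, e) : e ∈ E, u ∈ e} be the set of vertex–edge incidence pairs of G. The following are equivalent: (i) G has a vertex cover of size at most k; (ii) there exists S ⊆ V ∪ P such that |S| ≤ |E| + k, u ∈ S for every (u, e) ∈ S, and |S ∩ V| + (N − 1)·|{e ∈ E : (u, e) ∈ S for some u}| + |S ∩ P| ≥ N·|E| + k. -/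
/-- Correctness of the reduction from Vertex Cover to PDD on cluster
food-webs.  Let `G` be a finite graph, `k ≤ |V|` and `N ≥ 2`.  `G` has a
vertex cover of size at most `k` iff there is a set `S = SV ∪ SP` of vertices
and vertex–edge incidence pairs with `u ∈ S` for every pair `(u, e) ∈ S`,
`|S| ≤ |E| + k`, and
`|S ∩ V| + (N − 1)·|{e : some (u, e) ∈ S}| + |S ∩ P| ≥ N·|E| + k`. -/
theorem stmt_12 {V : Type*} [Fintype V] [DecidableEq V]
    (G : SimpleGraph V) [DecidableRel G.Adj] (k N : ℕ)
    (hk : k ≤ Fintype.card V) (hN : 2 ≤ N) :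
    (∃ C : Finset V, C.card ≤ k ∧ ∀ e ∈ G.edgeFinset, ∃ u ∈ C, u ∈ e) ↔
    (∃ (SV : Finset V) (SP : Finset (V × Sym2 V)),
        (∀ p ∈ SP, p.2 ∈ G.edgeFinset ∧ p.1 ∈ p.2) ∧
        (∀ p ∈ SP, p.1 ∈ SV) ∧
        SV.card + SP.card ≤ G.edgeFinset.card + k ∧
        N * G.edgeFinset.card + k ≤
          SV.card +
            (N - 1) *
              (G.edgeFinset.filter fun e => ∃ u : V, (u, e) ∈ SP).card +
            SP.card) := by
  classical
  constructor
  · rintro ⟨C, hC, hcov⟩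
    obtain ⟨SV, hCSV, hSVcard⟩ :=
      Finset.exists_superset_card_eq hC (by simpa using hk)
    choose f hf1 hf2 using hcov
    set SP : Finset (V × Sym2 V) :=
      G.edgeFinset.attach.image (fun e => (f e.1 e.2, e.1)) with hSP
    have hinj : Function.Injective
        (fun e : {x // x ∈ G.edgeFinset} => (f e.1 e.2, e.1)) := by
      intro a b hab
      exact Subtype.ext (congrArg Prod.snd hab)
    have hSPcard : SP.card = G.edgeFinset.card := by
      rw [hSP, Finset.card_image_of_injective _ hinj, Finset.card_attach]
    have hmem : ∀ p ∈ SP, p.2 ∈ G.edgeFinset ∧ p.1 ∈ p.2 ∧ p.1 ∈ SV := by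
      intro p hp
      rw [hSP, Finset.mem_image] at hp
      obtain ⟨e, _, rfl⟩ := hp
      exact ⟨e.2, hf2 e.1 e.2, hCSV (hf1 e.1 e.2)⟩
    have hfilt : (G.edgeFinset.filter fun e => ∃ u : V, (u, e) ∈ SP)
        = G.edgeFinset := by
      apply Finset.filter_true_of_mem
      intro e he
      exact ⟨f e he, Finset.mem_image.2 ⟨⟨e, he⟩, Finset.mem_attach _ _, rfl⟩⟩
    refine ⟨SV, SP, fun p hp => ⟨(hmem p hp).1, (hmem p hp).2.1⟩,
      fun p hp => (hmem p hp).2.2, ?_, ?_⟩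
    · omega
    · rw [hfilt, hSPcard, hSVcard]
      have : (N - 1) * G.edgeFinset.card + G.edgeFinset.card
          = N * G.edgeFinset.card := by
        have : N - 1 + 1 = N := by omega
        calc (N - 1) * G.edgeFinset.card + G.edgeFinset.card
            = (N - 1 + 1) * G.edgeFinset.card := by ring
          _ = N * G.edgeFinset.card := by rw [this]
      omega
  · rintro ⟨SV, SP, hedge, hSV, hcard, hbig⟩
    set F := G.edgeFinset.filter fun e => ∃ u : V, (u, e) ∈ SP with hF
    have hFsub : F ⊆ G.edgeFinset := Finset.filter_subset _ _
    have hFle : F.card ≤ SP.card := by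
      calc F.card ≤ (SP.image Prod.snd).card := by
            apply Finset.card_le_card
            intro e he
            obtain ⟨u, hu⟩ := (Finset.mem_filter.1 he).2
            exact Finset.mem_image.2 ⟨(u, e), hu, rfl⟩
        _ ≤ SP.card := Finset.card_image_le
    have hFle2 : F.card ≤ G.edgeFinset.card := Finset.card_le_card hFsub
    -- show |E| ≤ F.card
    have hEleF : G.edgeFinset.card ≤ F.card := by
      by_contra h
      push_neg at h
      -- (N-1)*F.card < (N-1)*|E|, contradiction with hbig and hcard
      have h1 : (N - 1) * F.card + (N - 1) ≤ (N - 1) * G.edgeFinset.card :=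
        by
          have := Nat.mul_le_mul_left (N - 1) (Nat.succ_le_of_lt h)
          simpa [Nat.mul_succ] using this
      have h2 : (N - 1) * G.edgeFinset.card + G.edgeFinset.card
          = N * G.edgeFinset.card := by
        have hn : N - 1 + 1 = N := by omega
        calc (N - 1) * G.edgeFinset.card + G.edgeFinset.card
            = (N - 1 + 1) * G.edgeFinset.card := by ring
          _ = N * G.edgeFinset.card := by rw [hn]
      omega
    have hFE : F = G.edgeFinset := Finset.eq_of_subset_of_card_le hFsub hEleF
    refine ⟨SV, by omega, ?_⟩
    intro e he
    have : e ∈ F := hFE ▸ he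
    obtain ⟨u, hu⟩ := (Finset.mem_filter.1 this).2
    exact ⟨u, hSV _ hu, (hedge _ hu).2⟩
end

section
/- Let U be a finite universe, Q a finite family of subsets of U, and k a natural number with k ≤ |Q|. The following are equivalent: (i) there exists Q' ⊆ Q with |Q'| ≤ k and ⋃Q' = U; (ii) there exist A ⊆ Q and B ⊆ U such that |A| + |B| ≤ k + |U|, every u ∈ B belongs to some member of A, and |A| + 2·|B| ≥ k + 2·|U|. -/
/-- Correctness of the reduction from Set Cover to s-PDD.  Let `U` be a finite
universe, `Q` a finite family of subsets of `U` and `k ≤ |Q|`.  There is a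
subfamily `Q' ⊆ Q` with `|Q'| ≤ k` covering all of `U` iff there are `A ⊆ Q`
and `B ⊆ U` with `|A| + |B| ≤ k + |U|`, every `u ∈ B` belonging to some member
of `A`, and `|A| + 2·|B| ≥ k + 2·|U|`. -/
theorem stmt_13 {α : Type*} [DecidableEq α] (U : Finset α)
    (Q : Finset (Finset α)) (hQ : ∀ W ∈ Q, W ⊆ U) (k : ℕ)
    (hk : k ≤ Q.card) :
    (∃ Q' ⊆ Q, Q'.card ≤ k ∧ Q'.biUnion id = U) ↔
    (∃ A ⊆ Q, ∃ B ⊆ U, A.card + B.card ≤ k + U.card ∧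
        (∀ u ∈ B, ∃ W ∈ A, u ∈ W) ∧
        k + 2 * U.card ≤ A.card + 2 * B.card) := by
  constructor
  · rintro ⟨Q', hQ'Q, hcard, hcover⟩
    obtain ⟨A, hQ'A, hAQ, hA⟩ := Finset.exists_subsuperset_card_eq hQ'Q hcard hk
    refine ⟨A, hAQ, U, Finset.Subset.refl U, by omega, ?_, by omega⟩
    intro u hu
    rw [← hcover] at hu
    obtain ⟨W, hW, hu⟩ := Finset.mem_biUnion.mp hu
    exact ⟨W, hQ'A hW, hu⟩
  · rintro ⟨A, hAQ, B, hBU, h1, h2, h3⟩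
    have hBcard : U.card ≤ B.card := by omega
    have hBeq : B = U := Finset.eq_of_subset_of_card_le hBU hBcard
    subst hBeq
    refine ⟨A, hAQ, by omega, ?_⟩
    apply Finset.Subset.antisymm
    · intro u hu
      obtain ⟨W, hW, hu⟩ := Finset.mem_biUnion.mp hu
      exact hQ W (hAQ hW) hu
    · intro u hu
      obtain ⟨W, hW, huW⟩ := h2 u hu
      exact Finset.mem_biUnion.mpr ⟨W, hW, huW⟩
end

section
/- Let M be a finite set of colors, c* ∈ M, and let G_1, …, G_q be pairwise vertex-disjoint finite undirected trees with vertex colorings χ_i : V_i → M such that each G_i contains exactly one vertex v_i with χ_i(v_i) = c*. Let H_i be the directed graph obtained from G_i by orienting every edge away from v_i. The following are equivalent: (i) for some i there exists S ⊆ V_i such that the subgraph of G_i induced by S is connected and χ_i restricted to S is a bijection onto M; (ii) there exists S ⊆ V_1 ∪ … ∪ V_q with |S| ≤ |M| such that every vertex of S other than v_1, …, v_q has its in-neighbor (in the disjoint union of H_1, …, H_q) contained in S, and |χ(S)| + |S| ≥ 2·|M|, where χ(S) denotes the set of colors of the vertices of S. -/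
/-- Correctness of the OR-composition from Graph Motif on trees to PDD.
The pairwise disjoint trees `G_i` are encoded as a forest on the vertex type
`V`: `comp x` is the index of the tree containing `x`, `root i` is the unique
vertex `v_i` of `G_i` colored `c*`, and `parent` maps every non-root vertex to
its neighbor towards the root (so that the orientation `H_i` of `G_i` away
from `v_i` has `parent x` as the unique in-neighbor of every non-root `x`).
The undirected tree `G_i` is the symmetrization of the parent relation.

Then: some `G_i` has a set `S` of vertices inducing a connected subgraph on
which `χ` is a bijection onto `M` iff there is a set `S` of vertices with
`|S| ≤ |M|` such that every vertex of `S` other than the roots has its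
in-neighbor in `S` and `|χ(S)| + |S| ≥ 2·|M|`. -/
theorem stmt_14 {V ι C : Type*} [Fintype V] [DecidableEq V] [Fintype ι]
    [DecidableEq C]
    (M : Finset C) (cstar : C) (hcstar : cstar ∈ M)
    (comp : V → ι) (root : ι → V) (parent : V → V)
    (hrootcomp : ∀ i, comp (root i) = i)
    (hparcomp : ∀ x, comp (parent x) = comp x)
    (hparroot : ∀ i, parent (root i) = root i)
    (hreach : ∀ x : V, ∃ n : ℕ, parent^[n] x = root (comp x))
    (χ : V → C) (hχ : ∀ x, χ x ∈ M)
    (huniq : ∀ x : V, χ x = cstar ↔ x = root (comp x)) :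
    (∃ (i : ι) (S : Finset V), (∀ x ∈ S, comp x = i) ∧
        ((SimpleGraph.fromRel fun a b : V =>
            parent a = b ∧ a ≠ root (comp a)).induce (S : Set V)).Connected ∧
        Set.BijOn χ (S : Set V) (M : Set C)) ↔
    (∃ S : Finset V, S.card ≤ M.card ∧
        (∀ x ∈ S, x ≠ root (comp x) → parent x ∈ S) ∧
        2 * M.card ≤ (S.image χ).card + S.card) := by
  classical
  set G := SimpleGraph.fromRel (fun a b : V => parent a = b ∧ a ≠ root (comp a)) with hG
  constructor
  · rintro ⟨i, S, hcomp, hconn, hbij⟩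
    -- image equals M
    have himg : S.image χ = M := by
      apply Finset.coe_injective
      rw [Finset.coe_image]
      exact hbij.image_eq
    have hcardim : (S.image χ).card = M.card := by rw [himg]
    have hScard : S.card = M.card := by
      rw [← hcardim, Finset.card_image_of_injOn hbij.injOn]
    -- root i ∈ S
    have hrS : root i ∈ S := by
      have : cstar ∈ (M : Set C) := hcstar
      rw [← hbij.image_eq] at this
      obtain ⟨v, hv, hχv⟩ := this
      have hvr : v = root (comp v) := (huniq v).mp hχv
      have : comp v = i := hcomp v hv
      rw [this] at hvr
      rwa [← hvr]
    refine ⟨S, le_of_eq hScard, ?_, by omega⟩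
    intro x hx hxroot
    have hxi : comp x = i := hcomp x hx
    have hxr : x ≠ root i := by rwa [hxi] at hxroot
    -- walk argument
    have hrS' : (root i : V) ∈ (S : Set V) := hrS
    have hxS' : (x : V) ∈ (S : Set V) := hx
    have key : ∀ (a b : (S : Set V)) (w : (G.induce (S : Set V)).Walk a b),
        (b : V) = root i → (∃ n, parent^[n] (a : V) = x) → parent x ∈ S := by
      intro a b w
      induction w with
      | nil =>
        rintro hb ⟨n, hn⟩
        rw [hb] at hn
        have hfix : parent^[n] (root i) = root i := Function.iterate_fixed (hparroot i) n
        rw [hfix] at hn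
        exact absurd hn.symm hxr
      | @cons a c b h p ih =>
        rintro hb hD
        by_cases hc : ∃ n, parent^[n] (c : V) = x
        · exact ih hb hc
        · have h' : G.Adj (a : V) (c : V) := h
          rw [hG, SimpleGraph.fromRel_adj] at h'
          obtain ⟨hne, hcase⟩ := h'
          rcases hcase with ⟨hp, -⟩ | ⟨hp, -⟩
          · obtain ⟨n, hn⟩ := hD
            cases n with
            | zero =>
              simp at hn
              have : (c : V) = parent x := by rw [← hn, hp]
              rw [← this]; exact c.2
            | succ m =>
              exfalso
              exact hc ⟨m, by rw [← hp] at *; rw [← Function.iterate_succ_apply]; exact hn⟩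
          · exfalso
            obtain ⟨n, hn⟩ := hD
            exact hc ⟨n + 1, by rw [Function.iterate_succ_apply, hp]; exact hn⟩
    obtain ⟨w⟩ := hconn.preconnected ⟨x, hxS'⟩ ⟨root i, hrS'⟩
    exact key _ _ w rfl ⟨0, rfl⟩
  · rintro ⟨S, hle, hclosed, hbig⟩
    -- S is parent-iterate closed
    have hiter : ∀ n, ∀ x ∈ S, parent^[n] x ∈ S := by
      intro n
      induction n with
      | zero => intro x hx; exact hx
      | succ m ih =>
        intro x hx
        rw [Function.iterate_succ_apply]
        apply ih
        by_cases hxr : x = root (comp x)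
        · rw [hxr, hparroot]; rwa [← hxr]
        · exact hclosed x hx hxr
    have hrootS : ∀ x ∈ S, root (comp x) ∈ S := by
      intro x hx
      obtain ⟨n, hn⟩ := hreach x
      rw [← hn]; exact hiter n x hx
    -- cardinalities
    have hsub : S.image χ ⊆ M := by
      intro c hc
      obtain ⟨x, -, rfl⟩ := Finset.mem_image.mp hc
      exact hχ x
    have h1 : (S.image χ).card ≤ M.card := Finset.card_le_card hsub
    have h2 : (S.image χ).card ≤ S.card := Finset.card_image_le
    have hScard : S.card = M.card := le_antisymm hle (by omega)
    have hcardim : (S.image χ).card = S.card := by omega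
    have hinj : Set.InjOn χ (S : Set V) := Finset.card_image_iff.mp hcardim
    have himg : S.image χ = M :=
      Finset.eq_of_subset_of_card_le hsub (by omega)
    -- the special root r
    have hMne : cstar ∈ S.image χ := himg ▸ hcstar
    obtain ⟨v, hv, hχv⟩ := Finset.mem_image.mp hMne
    have hvroot : v = root (comp v) := (huniq v).mp hχv
    set r := root (comp v) with hr
    have hrS : r ∈ S := hvroot ▸ hv
    -- every element of S has root(comp x) = r
    have hsame : ∀ x ∈ S, root (comp x) = r := by
      intro x hx
      have h1 : root (comp x) ∈ S := hrootS x hx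
      have h2 : χ (root (comp x)) = cstar := by
        rw [huniq]; rw [hrootcomp]
      apply hinj h1 hrS
      rw [h2, ← hvroot, hχv]
    refine ⟨comp v, S, ?_, ?_, ?_⟩
    · intro x hx
      have := hsame x hx
      have := congrArg comp this
      rwa [hrootcomp, hrootcomp] at this
    · -- connectivity
      have hrS' : (r : V) ∈ (S : Set V) := hrS
      have reach : ∀ (n : ℕ) (x : V) (hx : x ∈ S), parent^[n] x = r →
          (G.induce (S : Set V)).Reachable ⟨x, hx⟩ ⟨r, hrS'⟩ := by
        intro n
        induction n with
        | zero => intro x hx h; simp at h; subst h; rfl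
        | succ m ih =>
          intro x hx h
          by_cases hxr : x = r
          · subst hxr; rfl
          · have hxroot : x ≠ root (comp x) := by rw [hsame x hx]; exact hxr
            have hpS : parent x ∈ S := hclosed x hx hxroot
            have hne : x ≠ parent x := by
              intro he
              apply hxr
              have : parent^[m + 1] x = x := by
                rw [Function.iterate_fixed he.symm]
              rw [this] at h; exact h
            have hadj : (G.induce (S : Set V)).Adj ⟨x, hx⟩ ⟨parent x, hpS⟩ := by
              show G.Adj x (parent x)
              rw [hG, SimpleGraph.fromRel_adj]
              exact ⟨hne, Or.inl ⟨rfl, hxroot⟩⟩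
            refine hadj.reachable.trans (ih (parent x) hpS ?_)
            rw [← Function.iterate_succ_apply]; exact h
      have : Nonempty ((S : Set V) : Type _) := ⟨⟨r, hrS'⟩⟩
      refine ⟨fun a b => ?_⟩
      obtain ⟨x, hx⟩ := a
      obtain ⟨y, hy⟩ := b
      obtain ⟨n, hn⟩ := hreach x
      obtain ⟨m, hm⟩ := hreach y
      rw [hsame x hx] at hn
      rw [hsame y hy] at hm
      exact (reach n x hx hn).trans (reach m y hy hm).symm
    · refine ⟨fun x _ => hχ x, hinj, ?_⟩
      rw [Set.SurjOn, ← Finset.coe_image, himg]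
end

section
/- Let T be a rooted tree with leaf set X, let S ⊆ X, and let c : X → {0,1}. Suppose that for every edge uv of T with off(v) ∩ S = ∅ and off(u) ∩ S ≠ ∅ there exists a leaf y ∈ off(u) with c(y) = 1. Then for every vertex w of T with c(x) = 0 for all x ∈ off(w), either off(w) ⊆ S or off(w) ∩ S = ∅. -/
/-- Let `T` be a rooted tree with leaf set `X`, `S ⊆ X` and `c` a `{0,1}`
coloring.  If for every edge `uv` of `T` with `off(v) ∩ S = ∅` and
`off(u) ∩ S ≠ ∅` there is a leaf `y ∈ off(u)` with `c y = 1`, then for every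
vertex `w` all of whose leaf descendants are colored `0`, either
`off(w) ⊆ S` or `off(w) ∩ S = ∅`. -/
theorem stmt_16 {V : Type*} [Fintype V] (T : RTree V)
    (S : Set V) (hS : ∀ x ∈ S, T.IsLeaf x) (c : V → Bool)
    (hcond : ∀ u v : V, T.childRel u v → T.off v ∩ S = ∅ →
        (T.off u ∩ S).Nonempty → ∃ y ∈ T.off u, c y = true) :
    ∀ w : V, (∀ x ∈ T.off w, c x = false) →
      T.off w ⊆ S ∨ T.off w ∩ S = ∅ := by
  intro w hw
  by_contra h
  push_neg at h
  obtain ⟨hnsub, hne⟩ := h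
  obtain ⟨x, hxoff, hxS⟩ := Set.not_subset.mp hnsub
  have hNE : (T.off w ∩ S).Nonempty := hne
  -- key: induction along the chain from w down to x
  have key : ∀ a : V, T.descend a x → (∀ z ∈ T.off a, c z = false) →
      (T.off a ∩ S).Nonempty → False := by
    intro a ha
    induction ha using Relation.ReflTransGen.head_induction_on with
    | refl =>
      intro _ hxne
      obtain ⟨y, hy, hyS⟩ := hxne
      -- y is a leaf descendant of x; since x is a leaf, y = x
      have : y = x := by
        rcases hy.2.cases_head with h | ⟨c', hc', _⟩
        · exact h.symm
        · exact absurd hc' (hxoff.1 c')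
      exact hxS (this ▸ hyS)
    | head hstep htail ih =>
      rename_i a b
      intro hcol hNEa
      have hsub : T.off b ⊆ T.off a := by
        intro z hz
        exact ⟨hz.1, Relation.ReflTransGen.head hstep hz.2⟩
      by_cases hb : (T.off b ∩ S).Nonempty
      · exact ih (fun z hz => hcol z (hsub hz)) hb
      · have hbe : T.off b ∩ S = ∅ := Set.not_nonempty_iff_eq_empty.mp hb
        obtain ⟨y, hy, hcy⟩ := hcond a b hstep hbe hNEa
        have := hcol y hy
        simp [this] at hcy
  exact key w hxoff.2 hw hNE
end
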